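/- arXiv:1501.01549 — 3 statements merged into one kernel-verified Lean document; each statement's English description precedes it below -/
import Mathlib

section
/- For every embedding ψ of a probability mass function P on a finite set 𝒳×𝒴, the two leakage quantities coincide: S(X;BB')_ψ − I(X;Y) = S(AA';Y)_ψ − I(X;Y); in particular the leakage Δ_ψ := max{S(X;BB')_ψ − I(X;Y), S(AA';Y)_ψ − I(X;Y)} equals S(X;BB')_ψ − I(X;Y). -/
open scoped BigOperators
open Matrix
open scoped ComplexOrder

noncomputable section

/-- Base-2 Shannon entropy of a finitely supported real function. -/
def shannonEntropy {α : Type*} [Fintype α] (p : α → ℝ) : ℝ :=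
  -∑ x, p x * Real.logb 2 (p x)

/-- Von Neumann entropy: base-2 Shannon entropy of the eigenvalue multiset. -/
def vonNeumannEntropy {n : Type*} [Fintype n] [DecidableEq n] (ρ : Matrix n n ℂ) : ℝ :=
  if h : ρ.IsHermitian then shannonEntropy h.eigenvalues else 0

/-- Rank-one outer product `|φ⟩⟨φ|`. -/
def outer {n : Type*} (φ : n → ℂ) : Matrix n n ℂ :=
  fun i j => φ i * (starRingEnd ℂ) (φ j)

/-- Partial trace over the first tensor factor. -/
def trLeft {m n : Type*} [Fintype m] (ρ : Matrix (m × n) (m × n) ℂ) : Matrix n n ℂ :=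
  fun i j => ∑ a, ρ (a, i) (a, j)

/-- Partial trace over the second tensor factor. -/
def trRight {m n : Type*} [Fintype n] (ρ : Matrix (m × n) (m × n) ℂ) : Matrix m m ℂ :=
  fun i j => ∑ b, ρ (i, b) (j, b)

variable {𝒳 𝒴 : Type*} [Fintype 𝒳] [Fintype 𝒴] [DecidableEq 𝒳] [DecidableEq 𝒴]

def margX (P : 𝒳 × 𝒴 → ℝ) (x : 𝒳) : ℝ := ∑ y, P (x, y)

def margY (P : 𝒳 × 𝒴 → ℝ) (y : 𝒴) : ℝ := ∑ x, P (x, y)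

/-- Classical base-2 mutual information `I(X;Y) = H(X) + H(Y) − H(X,Y)`. -/
def mutualInfo (P : 𝒳 × 𝒴 → ℝ) : ℝ :=
  shannonEntropy (margX P) + shannonEntropy (margY P) - shannonEntropy P

section embedding

variable {dA dB : ℕ}

/-- Block `x` of the cq-state `ρ_{XBB'}`: the quantum state on registers `B B'` (the
working register `A'` traced out) obtained from
`(⟨x|_A ⊗ I)|ψ⟩⟨ψ|(|x⟩_A ⊗ I)` for the embedding
`|ψ⟩ = Σ_{x,y} √P(x,y) |x⟩|y⟩|φ^{x,y}⟩_{A'B'}`. -/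
def blockX (P : 𝒳 × 𝒴 → ℝ) (φ : 𝒳 → 𝒴 → Fin dA × Fin dB → ℂ) (x : 𝒳) :
    Matrix (𝒴 × Fin dB) (𝒴 × Fin dB) ℂ := fun p q =>
  ∑ a : Fin dA,
    ((Real.sqrt (P (x, p.1)) : ℂ) * φ x p.1 (a, p.2)) *
      (starRingEnd ℂ) ((Real.sqrt (P (x, q.1)) : ℂ) * φ x q.1 (a, q.2))

/-- Block `y` of the cq-state `ρ_{AA'Y}`: the state on `A A'` with `B'` traced out. -/
def blockY (P : 𝒳 × 𝒴 → ℝ) (φ : 𝒳 → 𝒴 → Fin dA × Fin dB → ℂ) (y : 𝒴) :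
    Matrix (𝒳 × Fin dA) (𝒳 × Fin dA) ℂ := fun p q =>
  ∑ b : Fin dB,
    ((Real.sqrt (P (p.1, y)) : ℂ) * φ p.1 y (p.2, b)) *
      (starRingEnd ℂ) ((Real.sqrt (P (q.1, y)) : ℂ) * φ q.1 y (q.2, b))

/-- `S(X;BB')_ψ = H(X) + S(ρ_{BB'}) − S(ρ_{XBB'})`. -/
def SXBB (P : 𝒳 × 𝒴 → ℝ) (φ : 𝒳 → 𝒴 → Fin dA × Fin dB → ℂ) : ℝ :=
  shannonEntropy (margX P) + vonNeumannEntropy (∑ x, blockX P φ x) -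
    vonNeumannEntropy (Matrix.blockDiagonal (blockX P φ))

/-- `S(AA';Y)_ψ = H(Y) + S(ρ_{AA'}) − S(ρ_{AA'Y})`. -/
def SAAY (P : 𝒳 × 𝒴 → ℝ) (φ : 𝒳 → 𝒴 → Fin dA × Fin dB → ℂ) : ℝ :=
  shannonEntropy (margY P) + vonNeumannEntropy (∑ y, blockY P φ y) -
    vonNeumannEntropy (Matrix.blockDiagonal (blockY P φ))

end embedding

/-!
The states `ρ_{BB'}` and `ρ_{AA'}` are the two marginals of the pure state `|ψ⟩`: for the
coefficient matrix `V` of `|ψ⟩` they are `V Vᴴ` and `(Vᴴ V)ᵀ`, which have the same nonzero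
spectrum and hence the same entropy. In the same way block `x` of `ρ_{XBB'}` is a marginal of a
pure state whose other marginal is `Σ_y P(x,y) tr_{B'}|φ^{x,y}⟩⟨φ^{x,y}|`; by strict correctness
this is `P_X(x) σ_x` for a single state `σ_x`, so
`S(ρ_{XBB'}) = H(X) + Σ_{x,y} P(x,y) S(tr_{B'}|φ^{x,y}⟩⟨φ^{x,y}|)`. Thus
`S(X;BB') = S(ρ_{BB'}) - Σ_{x,y} P(x,y) S(tr_{B'}|φ^{x,y}⟩⟨φ^{x,y}|)`, and exchanging the two
parties gives the same formula for `S(AA';Y)` with `ρ_{AA'}` and `tr_{A'}`. The two agree because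
the marginals of each pure state `φ^{x,y}` have equal entropy.
-/

theorem Finset.sum_smul_eq_of_eq_on_support {ι R M : Type*} [Fintype ι] [Semiring R]
    [AddCommMonoid M] [Module R M] (w : ι → R) (f : ι → M) (i₀ : ι)
    (hf : ∀ i, w i ≠ 0 → f i = f i₀) : ∑ i, w i • f i = (∑ i, w i) • f i₀ := by
  rw [Finset.sum_smul]
  refine Finset.sum_congr rfl fun i _ => ?_
  by_cases hi : w i = 0
  · simp [hi]
  · rw [hf i hi]

theorem shannonEntropy_smul {α : Type*} [Fintype α] (c : ℝ) (p : α → ℝ) :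
    shannonEntropy (c • p) = c * shannonEntropy p - c * Real.logb 2 c * ∑ x, p x := by
  simp only [shannonEntropy, Finset.mul_sum, ← Finset.sum_sub_distrib, ← Finset.sum_neg_distrib]
  refine Finset.sum_congr rfl fun x _ => ?_
  rcases eq_or_ne c 0 with rfl | hc
  · simp
  rcases eq_or_ne (p x) 0 with hp | hp
  · simp [hp]
  · rw [Pi.smul_apply, smul_eq_mul, Real.logb_mul hc hp]
    ring

section BlockDiagonal

variable {R m o : Type*} [CommRing R] [Fintype m] [DecidableEq m] [Fintype o] [DecidableEq o]

theorem Matrix.charmatrix_blockDiagonal (M : o → Matrix m m R) :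
    charmatrix (blockDiagonal M) = blockDiagonal fun k => charmatrix (M k) := by
  ext ⟨i, k⟩ ⟨j, k'⟩
  by_cases hk : k = k'
  · subst hk
    by_cases hij : i = j <;> simp [blockDiagonal_apply, hij]
  · simp [blockDiagonal_apply, hk]

theorem Matrix.charpoly_blockDiagonal (M : o → Matrix m m R) :
    (blockDiagonal M).charpoly = ∏ k, (M k).charpoly := by
  rw [charpoly, charmatrix_blockDiagonal, det_blockDiagonal]
  rfl

end BlockDiagonal

section Spectral

open Polynomial

variable {m n : Type*} [Fintype m] [Fintype n] [DecidableEq m] [DecidableEq n]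

/-- Unlike `vonNeumannEntropy`, this needs no hermiticity, and zero roots contribute nothing, so it
is invariant under `A * B ↦ B * A` for rectangular `A` and `B`. -/
def charpolyEntropy (ρ : Matrix m m ℂ) : ℝ :=
  (ρ.charpoly.roots.map fun z => -(z.re * Real.logb 2 z.re)).sum

theorem charpolyEntropy_eq_of_X_pow_mul {a b : ℕ} {ρ : Matrix m m ℂ} {σ : Matrix n n ℂ}
    (h : X ^ a * ρ.charpoly = X ^ b * σ.charpoly) : charpolyEntropy ρ = charpolyEntropy σ := by
  have hroots := congrArg Polynomial.roots h
  rw [roots_mul (mul_ne_zero (pow_ne_zero _ X_ne_zero) ρ.charpoly_monic.ne_zero),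
    roots_mul (mul_ne_zero (pow_ne_zero _ X_ne_zero) σ.charpoly_monic.ne_zero),
    roots_pow, roots_pow, roots_X] at hroots
  simpa [charpolyEntropy, Multiset.nsmul_singleton, Multiset.map_replicate] using
    congrArg (fun s : Multiset ℂ => (s.map fun z => -(z.re * Real.logb 2 z.re)).sum) hroots

theorem charpolyEntropy_mul_comm (A : Matrix m n ℂ) (B : Matrix n m ℂ) :
    charpolyEntropy (A * B) = charpolyEntropy (B * A) :=
  charpolyEntropy_eq_of_X_pow_mul (charpoly_mul_comm' A B)

theorem charpolyEntropy_transpose (A : Matrix m m ℂ) : charpolyEntropy Aᵀ = charpolyEntropy A := by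
  rw [charpolyEntropy, charpoly_transpose, charpolyEntropy]

theorem charpolyEntropy_conj_diagonal (U : unitary (Matrix m m ℂ)) (d : m → ℝ) :
    charpolyEntropy (Unitary.conjStarAlgAut ℂ _ U (diagonal fun i => (d i : ℂ))) =
      shannonEntropy d := by
  have hchar : (Unitary.conjStarAlgAut ℂ _ U (diagonal fun i => (d i : ℂ))).charpoly =
      ∏ i, (X - C (d i : ℂ)) := by
    rw [Unitary.conjStarAlgAut_apply, charpoly_mul_comm, ← mul_assoc, Unitary.coe_star_mul_self,
      Matrix.one_mul, charpoly_diagonal]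
  rw [charpolyEntropy, hchar, roots_prod _ _ (Finset.prod_ne_zero_iff.mpr fun i _ =>
    X_sub_C_ne_zero _)]
  simp [shannonEntropy, Finset.sum_neg_distrib]

theorem Matrix.IsHermitian.vonNeumannEntropy_eq_charpolyEntropy {A : Matrix m m ℂ}
    (hA : A.IsHermitian) : vonNeumannEntropy A = charpolyEntropy A := by
  rw [vonNeumannEntropy, dif_pos hA]
  conv_rhs => rw [hA.spectral_theorem]
  exact (charpolyEntropy_conj_diagonal _ _).symm

theorem Matrix.IsHermitian.vonNeumannEntropy_real_smul {A : Matrix m m ℂ} (hA : A.IsHermitian)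
    (c : ℝ) :
    vonNeumannEntropy (c • A) = c * vonNeumannEntropy A - c * Real.logb 2 c * A.trace.re := by
  have hcA : c • A = Unitary.conjStarAlgAut ℂ _ hA.eigenvectorUnitary
      (diagonal fun i => ((c • hA.eigenvalues) i : ℂ)) := by
    conv_lhs => rw [hA.spectral_theorem]
    rw [← Complex.coe_smul, ← map_smul]
    congr 1
    ext i j
    by_cases hij : i = j <;> simp [hij]
  rw [(hA.smul (IsSelfAdjoint.all c)).vonNeumannEntropy_eq_charpolyEntropy, hcA,
    charpolyEntropy_conj_diagonal, shannonEntropy_smul, vonNeumannEntropy, dif_pos hA,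
    hA.trace_eq_sum_eigenvalues]
  simp

theorem charpolyEntropy_blockDiagonal {o : Type*} [Fintype o] [DecidableEq o]
    (M : o → Matrix m m ℂ) :
    charpolyEntropy (blockDiagonal M) = ∑ k, charpolyEntropy (M k) := by
  rw [charpolyEntropy, charpoly_blockDiagonal,
    roots_prod _ _ (Finset.prod_ne_zero_iff.mpr fun k _ => (M k).charpoly_monic.ne_zero),
    Multiset.map_bind, Multiset.sum_bind]
  rfl

theorem vonNeumannEntropy_blockDiagonal {o : Type*} [Fintype o] [DecidableEq o]
    {M : o → Matrix m m ℂ} (hM : ∀ k, (M k).IsHermitian) :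
    vonNeumannEntropy (blockDiagonal M) = ∑ k, vonNeumannEntropy (M k) := by
  rw [(isHermitian_blockDiagonal_iff.mpr hM).vonNeumannEntropy_eq_charpolyEntropy,
    charpolyEntropy_blockDiagonal]
  exact Finset.sum_congr rfl fun k _ => ((hM k).vonNeumannEntropy_eq_charpolyEntropy).symm

theorem vonNeumannEntropy_zero : vonNeumannEntropy (0 : Matrix m m ℂ) = 0 := by
  rw [vonNeumannEntropy, dif_pos isHermitian_zero,
    isHermitian_zero.eigenvalues_eq_zero_iff.mpr rfl, shannonEntropy]
  simp

theorem vonNeumannEntropy_sum_smul_of_eq_on_support {ι : Type*} [Fintype ι] (w : ι → ℝ)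
    {T : ι → Matrix m m ℂ} (hT : ∀ i, (T i).IsHermitian) (htr : ∀ i, w i ≠ 0 → (T i).trace = 1)
    (hconst : ∀ i j, w i ≠ 0 → w j ≠ 0 → T i = T j) :
    vonNeumannEntropy (∑ i, w i • T i) =
      ∑ i, w i * vonNeumannEntropy (T i) - (∑ i, w i) * Real.logb 2 (∑ i, w i) := by
  by_cases hw : ∀ i, w i = 0
  · simp [hw, vonNeumannEntropy_zero]
  push Not at hw
  obtain ⟨i₀, hi₀⟩ := hw
  have hsupp : ∀ i, w i ≠ 0 → T i = T i₀ := fun i hi => hconst i i₀ hi hi₀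
  have hent : ∑ i, w i * vonNeumannEntropy (T i) = (∑ i, w i) * vonNeumannEntropy (T i₀) :=
    Finset.sum_smul_eq_of_eq_on_support w _ i₀ fun i hi => by rw [hsupp i hi]
  rw [Finset.sum_smul_eq_of_eq_on_support w T i₀ hsupp, (hT i₀).vonNeumannEntropy_real_smul,
    htr i₀ hi₀, hent, Complex.one_re, mul_one]

end Spectral

section PartialTrace

variable {ι m n : Type*}

theorem trRight_outer_eq [Fintype n] (v : m × n → ℂ) :
    trRight (outer v) = of (Function.curry v) * (of (Function.curry v))ᴴ := by
  ext i j
  simp [trRight, outer, mul_apply]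

theorem trLeft_outer_eq [Fintype m] (v : m × n → ℂ) :
    trLeft (outer v) = (of (Function.curry v))ᵀ * (of (Function.curry v))ᵀᴴ := by
  ext i j
  simp [trLeft, outer, mul_apply]

theorem isHermitian_trRight_outer [Fintype n] (v : m × n → ℂ) :
    (trRight (outer v)).IsHermitian := by
  rw [trRight_outer_eq]
  exact isHermitian_mul_conjTranspose_self _

theorem isHermitian_trLeft_outer [Fintype m] (v : m × n → ℂ) :
    (trLeft (outer v)).IsHermitian := by
  rw [trLeft_outer_eq]
  exact isHermitian_mul_conjTranspose_self _

theorem vonNeumannEntropy_trLeft_outer [Fintype m] [Fintype n] [DecidableEq m]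
    [DecidableEq n] (v : m × n → ℂ) :
    vonNeumannEntropy (trLeft (outer v)) = vonNeumannEntropy (trRight (outer v)) := by
  rw [(isHermitian_trLeft_outer v).vonNeumannEntropy_eq_charpolyEntropy,
    (isHermitian_trRight_outer v).vonNeumannEntropy_eq_charpolyEntropy,
    trLeft_outer_eq, trRight_outer_eq, charpolyEntropy_mul_comm,
    conjTranspose_transpose_eq_transpose_conjTranspose, ← transpose_mul,
    charpolyEntropy_transpose]

theorem trace_trRight_outer [Fintype m] [Fintype n] (v : m × n → ℂ) :
    (trRight (outer v)).trace = ((∑ p, ‖v p‖ ^ 2 : ℝ) : ℂ) := by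
  simp [trace, trRight, outer, Fintype.sum_prod_type, Complex.mul_conj,
    Complex.normSq_eq_norm_sq]

theorem trLeft_outer_comp_swap [Fintype n] (v : m × n → ℂ) :
    trLeft (outer (v ∘ Prod.swap)) = trRight (outer v) :=
  rfl

theorem trRight_outer_comp_swap [Fintype m] (v : m × n → ℂ) :
    trRight (outer (v ∘ Prod.swap)) = trLeft (outer v) :=
  rfl

theorem trLeft_outer_prod [Fintype ι] [Fintype m] (v : (ι × m) × n → ℂ) :
    trLeft (outer v) = ∑ i, trLeft (outer fun p : m × n => v ((i, p.1), p.2)) := by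
  ext j k
  simp [trLeft, outer, Fintype.sum_prod_type, Matrix.sum_apply]

theorem trRight_outer_sqrt_mul [Fintype ι] [Fintype n] {w : ι → ℝ} (hw : ∀ i, 0 ≤ w i)
    (u : ι → m × n → ℂ) :
    trRight (outer fun p : m × (ι × n) => (√(w p.2.1) : ℂ) * u p.2.1 (p.1, p.2.2)) =
      ∑ i, w i • trRight (outer (u i)) := by
  ext j k
  simp only [trRight, outer, Fintype.sum_prod_type, Matrix.sum_apply, Matrix.smul_apply,
    Finset.smul_sum]
  refine Finset.sum_congr rfl fun i _ => Finset.sum_congr rfl fun b _ => ?_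
  have hsq : (√(w i) : ℂ) * (√(w i) : ℂ) = w i := by
    rw [← Complex.ofReal_mul, Real.mul_self_sqrt (hw i)]
  rw [map_mul, Complex.conj_ofReal, Complex.real_smul, ← hsq]
  ring

end PartialTrace

section Embedding

variable {α β : Type*} {dA dB : ℕ}

/-- The amplitudes of `|ψ⟩ = Σ_{x,y} √P(x,y) |x⟩_A |y⟩_B |φ^{x,y}⟩_{A'B'}`, grouped as a vector on
Alice's registers `A A'` times Bob's registers `B B'`. -/
def embeddingVector (P : α × β → ℝ) (φ : α → β → Fin dA × Fin dB → ℂ) :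
    (α × Fin dA) × (β × Fin dB) → ℂ :=
  fun v => √(P (v.1.1, v.2.1)) * φ v.1.1 v.2.1 (v.1.2, v.2.2)

theorem blockX_eq_trLeft (P : α × β → ℝ) (φ : α → β → Fin dA × Fin dB → ℂ) (x : α) :
    blockX P φ x =
      trLeft (outer fun p : Fin dA × (β × Fin dB) =>
        (√(P (x, p.2.1)) : ℂ) * φ x p.2.1 (p.1, p.2.2)) :=
  rfl

theorem isHermitian_blockX [Fintype α] [Fintype β] (P : α × β → ℝ)
    (φ : α → β → Fin dA × Fin dB → ℂ) (x : α) : (blockX P φ x).IsHermitian := by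
  rw [blockX_eq_trLeft]
  exact isHermitian_trLeft_outer _

theorem sum_blockX [Fintype α] (P : α × β → ℝ) (φ : α → β → Fin dA × Fin dB → ℂ) :
    ∑ x, blockX P φ x = trLeft (outer (embeddingVector P φ)) := by
  rw [trLeft_outer_prod]
  rfl

theorem embeddingVector_swap (P : α × β → ℝ) (φ : α → β → Fin dA × Fin dB → ℂ) :
    embeddingVector (P ∘ Prod.swap) (fun y x => φ x y ∘ Prod.swap) =
      embeddingVector P φ ∘ Prod.swap :=
  rfl

theorem SAAY_eq_SXBB_swap [Fintype α] [Fintype β] [DecidableEq α] [DecidableEq β]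
    (P : α × β → ℝ) (φ : α → β → Fin dA × Fin dB → ℂ) :
    SAAY P φ = SXBB (P ∘ Prod.swap) (fun y x => φ x y ∘ Prod.swap) :=
  rfl

theorem vonNeumannEntropy_blockX [Fintype β] [DecidableEq β] (P : α × β → ℝ)
    (hP0 : ∀ p, 0 ≤ P p) (φ : α → β → Fin dA × Fin dB → ℂ)
    (hunit : ∀ x y, 0 < P (x, y) → ∑ v, ‖φ x y v‖ ^ 2 = 1)
    (hcorrA : ∀ x y y', 0 < P (x, y) → 0 < P (x, y') →
      trRight (outer (φ x y)) = trRight (outer (φ x y'))) (x : α) :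
    vonNeumannEntropy (blockX P φ x) =
      ∑ y, P (x, y) * vonNeumannEntropy (trRight (outer (φ x y))) -
        margX P x * Real.logb 2 (margX P x) := by
  have hpos : ∀ y, P (x, y) ≠ 0 → 0 < P (x, y) := fun y hy => (hP0 _).lt_of_ne' hy
  rw [blockX_eq_trLeft, vonNeumannEntropy_trLeft_outer,
    trRight_outer_sqrt_mul (fun y => hP0 (x, y)) (φ x)]
  exact vonNeumannEntropy_sum_smul_of_eq_on_support _ (fun y => isHermitian_trRight_outer _)
    (fun y hy => by rw [trace_trRight_outer, hunit x y (hpos y hy), Complex.ofReal_one])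
    (fun y y' hy hy' => hcorrA x y y' (hpos y hy) (hpos y' hy'))

theorem SXBB_eq [Fintype α] [Fintype β] [DecidableEq α] [DecidableEq β] (P : α × β → ℝ)
    (hP0 : ∀ p, 0 ≤ P p) (φ : α → β → Fin dA × Fin dB → ℂ)
    (hunit : ∀ x y, 0 < P (x, y) → ∑ v, ‖φ x y v‖ ^ 2 = 1)
    (hcorrA : ∀ x y y', 0 < P (x, y) → 0 < P (x, y') →
      trRight (outer (φ x y)) = trRight (outer (φ x y'))) :
    SXBB P φ = vonNeumannEntropy (trLeft (outer (embeddingVector P φ))) -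
      ∑ p, P p * vonNeumannEntropy (trRight (outer (φ p.1 p.2))) := by
  rw [SXBB, sum_blockX, vonNeumannEntropy_blockDiagonal (isHermitian_blockX P φ),
    Finset.sum_congr rfl fun x _ => vonNeumannEntropy_blockX P hP0 φ hunit hcorrA x,
    Finset.sum_sub_distrib, Fintype.sum_prod_type, shannonEntropy]
  ring

theorem SXBB_eq_SAAY [Fintype α] [Fintype β] [DecidableEq α] [DecidableEq β] (P : α × β → ℝ)
    (hP0 : ∀ p, 0 ≤ P p) (φ : α → β → Fin dA × Fin dB → ℂ)
    (hunit : ∀ x y, 0 < P (x, y) → ∑ v, ‖φ x y v‖ ^ 2 = 1)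
    (hcorrA : ∀ x y y', 0 < P (x, y) → 0 < P (x, y') →
      trRight (outer (φ x y)) = trRight (outer (φ x y')))
    (hcorrB : ∀ x x' y, 0 < P (x, y) → 0 < P (x', y) →
      trLeft (outer (φ x y)) = trLeft (outer (φ x' y))) :
    SXBB P φ = SAAY P φ := by
  have hunit_swap : ∀ y x, 0 < P (x, y) → ∑ v, ‖(φ x y ∘ Prod.swap) v‖ ^ 2 = 1 := fun y x h => by
    rw [← hunit x y h]
    exact (Equiv.prodComm _ _).sum_comp fun v => ‖φ x y v‖ ^ 2
  rw [SAAY_eq_SXBB_swap, SXBB_eq P hP0 φ hunit hcorrA,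
    SXBB_eq (P ∘ Prod.swap) (fun p => hP0 p.swap) (fun y x => φ x y ∘ Prod.swap) hunit_swap
      fun y x x' => hcorrB x x' y,
    embeddingVector_swap, trLeft_outer_comp_swap, ← vonNeumannEntropy_trLeft_outer,
    ← (Equiv.prodComm α β).sum_comp]
  congr 1
  refine Finset.sum_congr rfl fun p _ => ?_
  rw [trRight_outer_comp_swap, vonNeumannEntropy_trLeft_outer]
  rfl

end Embedding

theorem leakage_symmetric_general {dA dB : ℕ}
    (P : 𝒳 × 𝒴 → ℝ) (hP0 : ∀ p, 0 ≤ P p)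
    (φ : 𝒳 → 𝒴 → Fin dA × Fin dB → ℂ)
    (hunit : ∀ x y, 0 < P (x, y) → ∑ v, ‖φ x y v‖ ^ 2 = 1)
    (hcorrA : ∀ x y y', 0 < P (x, y) → 0 < P (x, y') →
      trRight (outer (φ x y)) = trRight (outer (φ x y')))
    (hcorrB : ∀ x x' y, 0 < P (x, y) → 0 < P (x', y) →
      trLeft (outer (φ x y)) = trLeft (outer (φ x' y))) :
    SXBB P φ - mutualInfo P = SAAY P φ - mutualInfo P ∧
    max (SXBB P φ - mutualInfo P) (SAAY P φ - mutualInfo P) =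
      SXBB P φ - mutualInfo P := by
  have h := SXBB_eq_SAAY P hP0 φ hunit hcorrA hcorrB
  exact ⟨by rw [h], by rw [h, max_self]⟩

/-- symmetry of leakage: for every embedding
`|ψ⟩ = Σ_{x,y} √P(x,y)|x⟩_A|y⟩_B|φ^{x,y}⟩_{A'B'}` of a pmf `P`, given as unit vectors
`φ^{x,y}` satisfying strict correctness (`tr_{B'}|φ^{x,y}⟩⟨φ^{x,y}|` depends only on `x`
and `tr_{A'}|φ^{x,y}⟩⟨φ^{x,y}|` depends only on `y` on the support of `P`),
the two leakage quantities coincide: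
`S(X;BB') − I(X;Y) = S(AA';Y) − I(X;Y)`; in particular their maximum is the first. -/
theorem leakage_symmetric {dA dB : ℕ}
    (P : 𝒳 × 𝒴 → ℝ) (hP0 : ∀ p, 0 ≤ P p) (hP1 : ∑ p, P p = 1)
    (φ : 𝒳 → 𝒴 → Fin dA × Fin dB → ℂ)
    (hunit : ∀ x y, 0 < P (x, y) → ∑ v, ‖φ x y v‖ ^ 2 = 1)
    (hcorrA : ∀ x y y', 0 < P (x, y) → 0 < P (x, y') →
      trRight (outer (φ x y)) = trRight (outer (φ x y')))
    (hcorrB : ∀ x x' y, 0 < P (x, y) → 0 < P (x', y) →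
      trLeft (outer (φ x y)) = trLeft (outer (φ x' y))) :
    SXBB P φ - mutualInfo P = SAAY P φ - mutualInfo P ∧
    max (SXBB P φ - mutualInfo P) (SAAY P φ - mutualInfo P) =
      SXBB P φ - mutualInfo P :=
  leakage_symmetric_general P hP0 φ hunit hcorrA hcorrB

end
end

section
/- Let P^{OT} be the pmf on {0,1}² × {0,1}² defined by P((x₀,x₁),(c,y)) = 1/8 if y = x_c and 0 otherwise (randomized 1-out-of-2 oblivious transfer of bits). Every regular embedding ψ_θ of P^{OT} satisfies S(tr_B|ψ_θ⟩⟨ψ_θ|) ≥ 3/2 and hence has leakage Δ(ψ_θ) ≥ 1/2; moreover the canonical embedding (θ ≡ 0) satisfies S(tr_B|ψ₀⟩⟨ψ₀|) = 3/2, so the leakage of the primitive P^{OT} equals 1/2 and is attained by the canonical embedding. -/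
open scoped BigOperators
open Matrix
open scoped ComplexOrder

noncomputable section

variable {𝒳 𝒴 : Type*} [Fintype 𝒳] [Fintype 𝒴] [DecidableEq 𝒳] [DecidableEq 𝒴]

/-- The regular embedding `|ψ_θ⟩ = Σ_{x,y} e^{iθ(x,y)} √P(x,y) |x⟩⊗|y⟩` of `P`. -/
def regEmbed (P : 𝒳 × 𝒴 → ℝ) (θ : 𝒳 × 𝒴 → ℝ) : 𝒳 × 𝒴 → ℂ :=
  fun p => Complex.exp ((θ p : ℂ) * Complex.I) * (Real.sqrt (P p) : ℂ)

/-- The leakage `Δ(ψ_θ) = S(tr_A |ψ_θ⟩⟨ψ_θ|) − I(X;Y)` of a regular embedding. -/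
def regLeakage (P : 𝒳 × 𝒴 → ℝ) (θ : 𝒳 × 𝒴 → ℝ) : ℝ :=
  vonNeumannEntropy (trLeft (outer (regEmbed P θ))) - mutualInfo P

/-- The leakage of the primitive `P`: minimal leakage over regular embeddings. -/
def primLeakage (P : 𝒳 × 𝒴 → ℝ) : ℝ := ⨅ θ : 𝒳 × 𝒴 → ℝ, regLeakage P θ

/-- The randomized 1-out-of-2 OT primitive `P^{OT}` on `{0,1}² × {0,1}²`:
`P((x₀,x₁),(c,y)) = 1/8` if `y = x_c` and `0` otherwise. -/
def Pot : (Bool × Bool) × (Bool × Bool) → ℝ := fun p =>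
  if p.2.2 = (if p.2.1 then p.1.2 else p.1.1) then 1 / 8 else 0

/-!
Both reduced states of `ψ_θ` become, once the four basis vectors are ordered around a 4-cycle,
`1/4` on the diagonal plus `1/8` times a unimodular weight on each edge of the cycle. A diagonal
unitary gauge spreads the total flux `4t` evenly over the four edges, and the discrete Fourier
transform diagonalises the resulting circulant, so the spectrum is `(1 ± cos t)/4, (1 ± sin t)/4`.
With `h` the binary entropy in bits, its entropy is `1 + (h((1 + cos t)/2) + h((1 + sin t)/2)) / 2`,
and the bound `h(p) ≥ 4 p (1 - p)` together with `sin² t + cos² t = 1` gives at least `3/2`, with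
equality at `t = 0`. As `I(X;Y) = 1`, the leakage is at least `1/2`, attained by `θ ≡ 0`.
-/

open Real Polynomial Set

section Entropy

lemma shannonEntropy_eq_of_map_eq {ι κ : Type*} [Fintype ι] [Fintype κ] {p : ι → ℝ} {q : κ → ℝ}
    (h : Finset.univ.val.map p = Finset.univ.val.map q) : shannonEntropy p = shannonEntropy q := by
  have := congrArg (fun s : Multiset ℝ => -(s.map fun y => y * logb 2 y).sum) h
  simpa only [shannonEntropy, Multiset.map_map, Function.comp_def, Finset.sum_map_val] using this

lemma shannonEntropy_eq_of_uniform_on_support {α : Type*} [Fintype α] {p : α → ℝ} {n : ℕ}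
    (h : ∀ x, p x = 0 ∨ p x = (2 ^ n)⁻¹) (hsum : ∑ x, p x = 1) : shannonEntropy p = n := by
  have hterm : ∀ x, p x * logb 2 (p x) = p x * -n := fun x => by
    rcases h x with hx | hx <;> simp [hx, logb_inv, logb_pow]
  simp [shannonEntropy, hterm, ← Finset.sum_mul, hsum]

lemma shannonEntropy_eq_sum_negMulLog {α : Type*} [Fintype α] (p : α → ℝ) :
    shannonEntropy p = (∑ x, negMulLog (p x)) / log 2 := by
  simp [shannonEntropy, negMulLog, logb, Finset.sum_div, neg_div, mul_div_assoc]

lemma negMulLog_half_add_negMulLog_one_sub_half (p : ℝ) :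
    negMulLog (p / 2) + negMulLog ((1 - p) / 2) = (binEntropy p + log 2) / 2 := by
  rw [div_eq_mul_inv, div_eq_mul_inv, negMulLog_mul, negMulLog_mul,
    binEntropy_eq_negMulLog_add_negMulLog_one_sub]
  simp only [negMulLog, log_inv]
  ring

lemma charpoly_eq_of_mul_eq_mul {n R : Type*} [Fintype n] [DecidableEq n] [CommRing R]
    {A B V : Matrix n n R} (hV : IsUnit V.det) (h : A * V = V * B) : A.charpoly = B.charpoly := by
  have hA : A = V * B * V⁻¹ := by
    rw [← h, Matrix.mul_assoc, Matrix.mul_nonsing_inv _ hV, Matrix.mul_one]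
  rw [hA, Matrix.charpoly_mul_comm, ← Matrix.mul_assoc, Matrix.nonsing_inv_mul _ hV,
    Matrix.one_mul]

lemma vonNeumannEntropy_eq_of_charpoly_eq {n m : Type*} [Fintype n] [DecidableEq n] [Fintype m]
    {A : Matrix n n ℂ} (hA : A.IsHermitian) {p : m → ℝ}
    (h : A.charpoly = ∏ i, (X - C (p i : ℂ))) : vonNeumannEntropy A = shannonEntropy p := by
  have hroots := hA.roots_charpoly_eq_eigenvalues
  rw [h, roots_prod _ _ (by simp [Finset.prod_ne_zero_iff, X_sub_C_ne_zero])] at hroots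
  simp only [roots_X_sub_C, Multiset.bind_singleton, Complex.coe_algebraMap] at hroots
  have hre := congrArg (Multiset.map Complex.re) hroots
  simp only [Multiset.map_map, Function.comp_def, Complex.ofReal_re] at hre
  rw [vonNeumannEntropy, dif_pos hA]
  exact shannonEntropy_eq_of_map_eq hre.symm

end Entropy

section BinaryEntropy

def binEntropyDefect (p : ℝ) : ℝ := binEntropy p - 4 * log 2 * (p * (1 - p))

def binEntropyDefectDeriv (p : ℝ) : ℝ := log (1 - p) - log p - 4 * log 2 * (1 - 2 * p)

lemma continuous_binEntropyDefect : Continuous binEntropyDefect := by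
  unfold binEntropyDefect; fun_prop

lemma hasDerivAt_binEntropyDefect {p : ℝ} (hp₀ : p ≠ 0) (hp₁ : p ≠ 1) :
    HasDerivAt binEntropyDefect (binEntropyDefectDeriv p) p :=
  ((hasDerivAt_binEntropy hp₀ hp₁).sub
    (((hasDerivAt_id p).mul ((hasDerivAt_id p).const_sub 1)).const_mul (4 * log 2))).congr_deriv
    (by simp only [binEntropyDefectDeriv, id]; ring)

lemma hasDerivAt_binEntropyDefectDeriv {p : ℝ} (hp₀ : p ≠ 0) (hp₁ : p ≠ 1) :
    HasDerivAt binEntropyDefectDeriv (8 * log 2 - (p * (1 - p))⁻¹) p := by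
  have hp₁' : 1 - p ≠ 0 := sub_ne_zero.2 hp₁.symm
  exact ((((hasDerivAt_id p).const_sub 1).log hp₁').sub (hasDerivAt_log hp₀)).sub
    ((((hasDerivAt_id p).const_mul 2).const_sub 1).const_mul (4 * log 2)) |>.congr_deriv
    (by simp only [id]; field_simp; ring)

lemma exists_eight_mul_log_two_mul_eq_one :
    ∃ a : ℝ, 0 < a ∧ a < 1 / 2 ∧ 8 * log 2 * (a * (1 - a)) = 1 := by
  have hL : 1 / 2 < log 2 := by linarith [log_two_gt_d9]
  have hr₀ : 0 < 1 / (2 * log 2) := by positivity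
  have hr₁ : 1 / (2 * log 2) < 1 := by rw [div_lt_one (by linarith)]; linarith
  set s := √(1 - 1 / (2 * log 2))
  have hs_sq : s ^ 2 = 1 - 1 / (2 * log 2) := sq_sqrt (by linarith)
  have hs_pos : 0 < s := sqrt_pos.2 (by linarith)
  have hs_lt : s < 1 := by nlinarith
  refine ⟨(1 - s) / 2, by linarith, by linarith, ?_⟩
  rw [show (1 - s) / 2 * (1 - (1 - s) / 2) = (1 - s ^ 2) / 4 by ring, hs_sq]
  field_simp
  ring

lemma convexOn_binEntropyDefect {a : ℝ} (ha₀ : 0 < a) (ha : 1 ≤ 8 * log 2 * (a * (1 - a))) :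
    ConvexOn ℝ (Icc a (1 / 2)) binEntropyDefect := by
  refine convexOn_of_hasDerivWithinAt2_nonneg (convex_Icc _ _)
    continuous_binEntropyDefect.continuousOn (f' := binEntropyDefectDeriv)
    (f'' := fun x => 8 * log 2 - (x * (1 - x))⁻¹) (fun x hx => ?_) (fun x hx => ?_)
    (fun x hx => ?_) <;> rw [interior_Icc] at hx <;> obtain ⟨hax, hx⟩ := hx
  · exact (hasDerivAt_binEntropyDefect (by linarith) (by linarith)).hasDerivWithinAt
  · exact (hasDerivAt_binEntropyDefectDeriv (by linarith) (by linarith)).hasDerivWithinAt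
  · have hx_pos : 0 < x * (1 - x) := by nlinarith
    have : a * (1 - a) ≤ x * (1 - x) := by nlinarith
    have := mul_le_mul_of_nonneg_left this (by linarith [log_two_gt_d9] : (0 : ℝ) ≤ 8 * log 2)
    rw [sub_nonneg, inv_le_iff_one_le_mul₀ hx_pos]
    linarith

lemma concaveOn_binEntropyDefect {b : ℝ} (hb₁ : b ≤ 1 / 2) (hb : 8 * log 2 * (b * (1 - b)) ≤ 1) :
    ConcaveOn ℝ (Icc 0 b) binEntropyDefect := by
  refine concaveOn_of_hasDerivWithinAt2_nonpos (convex_Icc _ _)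
    continuous_binEntropyDefect.continuousOn (f' := binEntropyDefectDeriv)
    (f'' := fun x => 8 * log 2 - (x * (1 - x))⁻¹) (fun x hx => ?_) (fun x hx => ?_)
    (fun x hx => ?_) <;> rw [interior_Icc] at hx <;> obtain ⟨hx, hxb⟩ := hx
  · exact (hasDerivAt_binEntropyDefect hx.ne' (by linarith)).hasDerivWithinAt
  · exact (hasDerivAt_binEntropyDefectDeriv hx.ne' (by linarith)).hasDerivWithinAt
  · have hx_pos : 0 < x * (1 - x) := by nlinarith
    have : x * (1 - x) ≤ b * (1 - b) := by nlinarith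
    have := mul_le_mul_of_nonneg_left this (by linarith [log_two_gt_d9] : (0 : ℝ) ≤ 8 * log 2)
    rw [sub_nonpos, ← one_div, le_div_iff₀ hx_pos]
    linarith

/- With `8 log 2 · a (1 - a) = 1`, the defect is concave on `[0, a]` and convex on `[a, 1/2]`;
it vanishes at `0` and at `1/2`, where its derivative vanishes too. -/
lemma binEntropyDefect_nonneg_of_le_half {p : ℝ} (hp₀ : 0 ≤ p) (hp : p ≤ 1 / 2) :
    0 ≤ binEntropyDefect p := by
  obtain ⟨a, ha₀, ha, ha_eq⟩ := exists_eight_mul_log_two_mul_eq_one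
  have h_zero : binEntropyDefect 0 = 0 := by simp [binEntropyDefect]
  have h_half : binEntropyDefect (1 / 2) = 0 := by simp [binEntropyDefect]; ring
  have h_convex_part : ∀ q ∈ Icc a (1 / 2), 0 ≤ binEntropyDefect q := by
    intro q hq
    rcases hq.2.eq_or_lt with rfl | hq_lt
    · exact h_half.ge
    have hslope := (convexOn_binEntropyDefect ha₀ ha_eq.ge).slope_le_of_hasDerivAt hq
      (right_mem_Icc.2 ha.le) hq_lt (hasDerivAt_binEntropyDefect (by norm_num) (by norm_num))
    rw [slope_def_field, h_half, div_le_iff₀ (by linarith)] at hslope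
    norm_num [binEntropyDefectDeriv] at hslope
    linarith
  rcases le_total p a with hpa | hap
  · have := (concaveOn_binEntropyDefect ha.le ha_eq.le).ge_on_segment (left_mem_Icc.2 ha₀.le)
      (right_mem_Icc.2 ha₀.le) (by rw [segment_eq_Icc ha₀.le]; exact ⟨hp₀, hpa⟩)
    rw [h_zero] at this
    exact (le_min le_rfl (h_convex_part a (left_mem_Icc.2 ha.le))).trans this
  · exact h_convex_part p ⟨hap, hp⟩

theorem four_mul_log_two_mul_le_binEntropy {p : ℝ} (hp₀ : 0 ≤ p) (hp₁ : p ≤ 1) :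
    4 * log 2 * (p * (1 - p)) ≤ binEntropy p := by
  wlog hp : p ≤ 1 / 2 generalizing p
  · simpa [mul_comm] using this (p := 1 - p) (by linarith) (by linarith) (by linarith)
  simpa [binEntropyDefect] using binEntropyDefect_nonneg_of_le_half hp₀ hp

end BinaryEntropy

section PhasedCycle

def phase (x : ℝ) : ℂ := Complex.exp (x * Complex.I)

lemma phase_add (x y : ℝ) : phase (x + y) = phase x * phase y := by
  simp [phase, add_mul, Complex.exp_add]

lemma phase_neg (x : ℝ) : phase (-x) = (starRingEnd ℂ) (phase x) := by
  simp [phase, ← Complex.exp_conj]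

lemma phase_eq_cos_add_sin_mul_I (x : ℝ) : phase x = cos x + sin x * Complex.I := by
  rw [phase, Complex.exp_mul_I, ← Complex.ofReal_cos, ← Complex.ofReal_sin]

def phasedCycle (a b c d : ℝ) : Matrix (Fin 4) (Fin 4) ℂ :=
  !![1 / 4, phase a / 8, 0, phase (-d) / 8;
     phase (-a) / 8, 1 / 4, phase b / 8, 0;
     0, phase (-b) / 8, 1 / 4, phase c / 8;
     phase d / 8, 0, phase (-c) / 8, 1 / 4]

lemma isHermitian_phasedCycle (a b c d : ℝ) : (phasedCycle a b c d).IsHermitian := by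
  ext j k
  fin_cases j <;> fin_cases k <;> simp [phasedCycle, phase_neg]

def cycleGauge (a b c t : ℝ) : Matrix (Fin 4) (Fin 4) ℂ :=
  Matrix.diagonal ![1, phase (t - a), phase (2 * t - a - b), phase (3 * t - a - b - c)]

lemma isUnit_det_cycleGauge (a b c t : ℝ) : IsUnit (cycleGauge a b c t).det := by
  simp [cycleGauge, Fin.prod_univ_four, phase, Complex.exp_ne_zero]

lemma phasedCycle_mul_cycleGauge {a b c d t : ℝ} (h : a + b + c + d = 4 * t) :
    phasedCycle a b c d * cycleGauge a b c t = cycleGauge a b c t * phasedCycle t t t t := by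
  obtain rfl : d = 4 * t - a - b - c := by linarith
  ext j k
  fin_cases j <;> fin_cases k <;>
    simp [phasedCycle, cycleGauge, Matrix.mul_apply, Fin.sum_univ_four]
  all_goals first | ring1 | (field_simp; simp only [← phase_add]; congr 1; ring)

def cycleFourier : Matrix (Fin 4) (Fin 4) ℂ :=
  !![1, 1, 1, 1;
     1, Complex.I, -1, -Complex.I;
     1, -1, 1, -1;
     1, -Complex.I, -1, Complex.I]

lemma det_cycleFourier : cycleFourier.det = -16 * Complex.I := by
  simp [Matrix.det_succ_row_zero, Fin.sum_univ_succ, cycleFourier, Fin.succAbove]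
  ring_nf

def cycleSpectrum (t : ℝ) : Fin 4 → ℝ :=
  ![(1 + cos t) / 4, (1 - sin t) / 4, (1 - cos t) / 4, (1 + sin t) / 4]

lemma phasedCycle_mul_cycleFourier (t : ℝ) :
    phasedCycle t t t t * cycleFourier =
      cycleFourier * Matrix.diagonal (fun k => (cycleSpectrum t k : ℂ)) := by
  ext j k
  fin_cases j <;> fin_cases k <;>
    simp [phasedCycle, cycleFourier, cycleSpectrum, Matrix.mul_apply, Fin.sum_univ_four,
      phase_eq_cos_add_sin_mul_I] <;> ring_nf <;> simp [Complex.I_sq] <;> ring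

lemma charpoly_phasedCycle (a b c d : ℝ) :
    (phasedCycle a b c d).charpoly =
      ∏ k, (X - C (cycleSpectrum ((a + b + c + d) / 4) k : ℂ)) := by
  rw [charpoly_eq_of_mul_eq_mul (isUnit_det_cycleGauge a b c _)
      (phasedCycle_mul_cycleGauge (t := (a + b + c + d) / 4) (by ring)),
    charpoly_eq_of_mul_eq_mul (by simp [det_cycleFourier]) (phasedCycle_mul_cycleFourier _),
    Matrix.charpoly_diagonal]

lemma vonNeumannEntropy_phasedCycle_submatrix {ι : Type*} [Fintype ι] [DecidableEq ι]
    (e : ι ≃ Fin 4) (a b c d : ℝ) :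
    vonNeumannEntropy ((phasedCycle a b c d).submatrix e e) =
      shannonEntropy (cycleSpectrum ((a + b + c + d) / 4)) := by
  refine vonNeumannEntropy_eq_of_charpoly_eq ((isHermitian_phasedCycle a b c d).submatrix e) ?_
  rw [← charpoly_phasedCycle, ← Matrix.charpoly_reindex e.symm, Matrix.reindex_apply,
    Equiv.symm_symm]

lemma shannonEntropy_cycleSpectrum (t : ℝ) : shannonEntropy (cycleSpectrum t) =
    1 + (binEntropy ((1 + cos t) / 2) + binEntropy ((1 + sin t) / 2)) / (2 * log 2) := by
  have hcos := negMulLog_half_add_negMulLog_one_sub_half ((1 + cos t) / 2)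
  have hsin := negMulLog_half_add_negMulLog_one_sub_half ((1 + sin t) / 2)
  rw [shannonEntropy_eq_sum_negMulLog, Fin.sum_univ_four]
  simp only [cycleSpectrum, Matrix.cons_val_zero, Matrix.cons_val_one, Matrix.cons_val_two,
    Matrix.cons_val_three, Matrix.head_cons, Matrix.tail_cons]
  have hL : log 2 ≠ 0 := by positivity
  field_simp at hcos hsin ⊢
  ring_nf at hcos hsin ⊢
  linarith

lemma three_halves_le_shannonEntropy_cycleSpectrum (t : ℝ) :
    3 / 2 ≤ shannonEntropy (cycleSpectrum t) := by
  have hcos := four_mul_log_two_mul_le_binEntropy (p := (1 + cos t) / 2)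
    (by linarith [neg_one_le_cos t]) (by linarith [cos_le_one t])
  have hsin := four_mul_log_two_mul_le_binEntropy (p := (1 + sin t) / 2)
    (by linarith [neg_one_le_sin t]) (by linarith [sin_le_one t])
  rw [show (1 + cos t) / 2 * (1 - (1 + cos t) / 2) = sin t ^ 2 / 4 by
    linear_combination (-1 / 4) * sin_sq_add_cos_sq t] at hcos
  rw [show (1 + sin t) / 2 * (1 - (1 + sin t) / 2) = cos t ^ 2 / 4 by
    linear_combination (-1 / 4) * sin_sq_add_cos_sq t] at hsin
  have hsum : log 2 ≤ binEntropy ((1 + cos t) / 2) + binEntropy ((1 + sin t) / 2) := by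
    linear_combination hcos + hsin - log 2 * sin_sq_add_cos_sq t
  rw [shannonEntropy_cycleSpectrum, ← sub_le_iff_le_add', le_div_iff₀ (by positivity)]
  linarith

lemma shannonEntropy_cycleSpectrum_zero : shannonEntropy (cycleSpectrum 0) = 3 / 2 := by
  have hL : log 2 ≠ 0 := by positivity
  rw [shannonEntropy_cycleSpectrum, cos_zero, sin_zero, add_zero, add_self_div_two,
    binEntropy_one, one_div, binEntropy_two_inv]
  field_simp
  ring

end PhasedCycle

section ObliviousTransfer

lemma outer_regEmbed_apply {α β : Type*} (P θ : α × β → ℝ) (p q : α × β) :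
    outer (regEmbed P θ) p q = phase (θ p - θ q) * (√(P p) * √(P q) : ℝ) := by
  simp only [outer, regEmbed, map_mul, Complex.conj_ofReal, sub_eq_add_neg, phase_add, phase_neg]
  simp only [phase]
  push_cast
  ring

-- Consecutive indices are pairs `(x₀, x₁)` differing in one bit, exactly those coupled in `tr_B`.
def senderCycle : Bool × Bool ≃ Fin 4 where
  toFun
    | (false, false) => 0 | (false, true) => 1 | (true, true) => 2 | (true, false) => 3
  invFun k := ![(false, false), (false, true), (true, true), (true, false)] k
  left_inv := by decide
  right_inv := by decide

-- Consecutive indices are pairs `(c, y)` with different `c`, exactly those coupled in `tr_A`.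
def receiverCycle : Bool × Bool ≃ Fin 4 where
  toFun
    | (false, false) => 0 | (true, false) => 1 | (false, true) => 2 | (true, true) => 3
  invFun k := ![(false, false), (true, false), (false, true), (true, true)] k
  left_inv := by decide
  right_inv := by decide

lemma inv_sqrt_eight_mul_self : ((√8 : ℝ) : ℂ)⁻¹ * ((√8 : ℝ) : ℂ)⁻¹ = 1 / 8 := by
  rw [← mul_inv, ← Complex.ofReal_mul, mul_self_sqrt (by norm_num)]
  norm_num

lemma trRight_outer_regEmbed_Pot (θ : (Bool × Bool) × (Bool × Bool) → ℝ) :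
    trRight (outer (regEmbed Pot θ)) =
      (phasedCycle (θ ((false, false), (false, false)) - θ ((false, true), (false, false)))
        (θ ((false, true), (true, true)) - θ ((true, true), (true, true)))
        (θ ((true, true), (false, true)) - θ ((true, false), (false, true)))
        (θ ((true, false), (true, false)) - θ ((false, false), (true, false)))).submatrix
        senderCycle senderCycle := by
  ext ⟨x₀, x₁⟩ ⟨y₀, y₁⟩
  cases x₀ <;> cases x₁ <;> cases y₀ <;> cases y₁ <;>
    simp [trRight, outer_regEmbed_apply, Pot, phasedCycle, senderCycle, Fintype.sum_prod_type,
      inv_sqrt_eight_mul_self, phase] <;> ring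

lemma trLeft_outer_regEmbed_Pot (θ : (Bool × Bool) × (Bool × Bool) → ℝ) :
    trLeft (outer (regEmbed Pot θ)) =
      (phasedCycle (θ ((false, false), (false, false)) - θ ((false, false), (true, false)))
        (θ ((true, false), (true, false)) - θ ((true, false), (false, true)))
        (θ ((true, true), (false, true)) - θ ((true, true), (true, true)))
        (θ ((false, true), (true, true)) - θ ((false, true), (false, false)))).submatrix
        receiverCycle receiverCycle := by
  ext ⟨c, y⟩ ⟨c', y'⟩
  cases c <;> cases y <;> cases c' <;> cases y' <;>
    simp [trLeft, outer_regEmbed_apply, Pot, phasedCycle, receiverCycle, Fintype.sum_prod_type,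
      inv_sqrt_eight_mul_self, phase] <;> ring

lemma mutualInfo_Pot : mutualInfo Pot = 1 := by
  have hX : shannonEntropy (margX Pot) = 2 := by
    refine shannonEntropy_eq_of_uniform_on_support (fun x => .inr ?_) ?_
    · rcases x with ⟨_ | _, _ | _⟩ <;> norm_num [margX, Pot, Fintype.sum_prod_type]
    · norm_num [margX, Pot, Fintype.sum_prod_type]
  have hY : shannonEntropy (margY Pot) = 2 := by
    refine shannonEntropy_eq_of_uniform_on_support (fun y => .inr ?_) ?_
    · rcases y with ⟨_ | _, _ | _⟩ <;> norm_num [margY, Pot, Fintype.sum_prod_type]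
    · norm_num [margY, Pot, Fintype.sum_prod_type]
  have hXY : shannonEntropy Pot = 3 := by
    refine shannonEntropy_eq_of_uniform_on_support (fun p => ?_) ?_
    · unfold Pot; split_ifs <;> norm_num
    · norm_num [Pot, Fintype.sum_prod_type]
  rw [mutualInfo, hX, hY, hXY]
  norm_num

lemma three_halves_le_vonNeumannEntropy_trRight_Pot (θ : (Bool × Bool) × (Bool × Bool) → ℝ) :
    3 / 2 ≤ vonNeumannEntropy (trRight (outer (regEmbed Pot θ))) := by
  rw [trRight_outer_regEmbed_Pot, vonNeumannEntropy_phasedCycle_submatrix]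
  exact three_halves_le_shannonEntropy_cycleSpectrum _

lemma three_halves_le_vonNeumannEntropy_trLeft_Pot (θ : (Bool × Bool) × (Bool × Bool) → ℝ) :
    3 / 2 ≤ vonNeumannEntropy (trLeft (outer (regEmbed Pot θ))) := by
  rw [trLeft_outer_regEmbed_Pot, vonNeumannEntropy_phasedCycle_submatrix]
  exact three_halves_le_shannonEntropy_cycleSpectrum _

lemma vonNeumannEntropy_trRight_Pot_zero :
    vonNeumannEntropy (trRight (outer (regEmbed Pot 0))) = 3 / 2 := by
  rw [trRight_outer_regEmbed_Pot, vonNeumannEntropy_phasedCycle_submatrix]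
  simpa using shannonEntropy_cycleSpectrum_zero

lemma vonNeumannEntropy_trLeft_Pot_zero :
    vonNeumannEntropy (trLeft (outer (regEmbed Pot 0))) = 3 / 2 := by
  rw [trLeft_outer_regEmbed_Pot, vonNeumannEntropy_phasedCycle_submatrix]
  simpa using shannonEntropy_cycleSpectrum_zero

end ObliviousTransfer

/-- every regular embedding `ψ_θ` of `P^{OT}` satisfies
`S(tr_B|ψ_θ⟩⟨ψ_θ|) ≥ 3/2`, hence has leakage `≥ 1/2`; the canonical embedding
(`θ ≡ 0`) attains `S = 3/2`, so the leakage of `P^{OT}` equals `1/2` and is attained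
by the canonical embedding. -/
theorem ot_leakage_one_half :
    (∀ θ : (Bool × Bool) × (Bool × Bool) → ℝ,
      3 / 2 ≤ vonNeumannEntropy (trRight (outer (regEmbed Pot θ))) ∧
      1 / 2 ≤ regLeakage Pot θ) ∧
    vonNeumannEntropy (trRight (outer (regEmbed Pot 0))) = 3 / 2 ∧
    primLeakage Pot = 1 / 2 ∧ regLeakage Pot 0 = 1 / 2 := by
  have hleak θ : 1 / 2 ≤ regLeakage Pot θ := by
    rw [regLeakage, mutualInfo_Pot]
    linarith [three_halves_le_vonNeumannEntropy_trLeft_Pot θ]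
  have hleak₀ : regLeakage Pot 0 = 1 / 2 := by
    rw [regLeakage, mutualInfo_Pot, vonNeumannEntropy_trLeft_Pot_zero]
    norm_num
  have hprim : primLeakage Pot = 1 / 2 :=
    IsLeast.csInf_eq ⟨⟨0, hleak₀⟩, forall_mem_range.2 hleak⟩
  exact ⟨fun θ => ⟨three_halves_le_vonNeumannEntropy_trRight_Pot θ, hleak θ⟩,
    vonNeumannEntropy_trRight_Pot_zero, hprim, hleak₀⟩

end
end

section
/- Let r ≥ 1 and let P^{OT^r} be the pmf on ({0,1}^r × {0,1}^r) × ({0,1} × {0,1}^r) defined by P((x₀,x₁),(c,y)) = 2^{−2r−1} if y = x_c and 0 otherwise (randomized 1-out-of-2 string oblivious transfer of r-bit strings). Then every regular embedding of P^{OT^r} has leakage at least Δ_r := −(1/2 + 2^{−(r+1)})·log₂(1/2 + 2^{−(r+1)}) + (2^r − 1)(r+1)·2^{−(r+1)} − r/2, the common leakage of all regular embeddings of the Rabin string OT primitive P^{ROT^r}; in particular the leakage of P^{OT^r} is at least 1 − (r+4)·2^{−(r+1)}. -/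
open scoped BigOperators
open Matrix
open scoped ComplexOrder

noncomputable section

variable {𝒳 𝒴 : Type*} [Fintype 𝒳] [Fintype 𝒴] [DecidableEq 𝒳] [DecidableEq 𝒴]

/-- The randomized 1-out-of-2 string OT primitive `P^{OT^r}` on
`({0,1}^r × {0,1}^r) × ({0,1} × {0,1}^r)`:
`P((x₀,x₁),(c,y)) = 2^{−2r−1}` if `y = x_c` and `0` otherwise. -/
def PotStr (r : ℕ) :
    ((Fin r → Bool) × (Fin r → Bool)) × (Bool × (Fin r → Bool)) → ℝ := fun p =>
  if p.2.2 = (if p.2.1 then p.1.2 else p.1.1) then (2 : ℝ) ^ (-(2 * r + 1 : ℤ)) else 0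

/-- The common leakage `Δ_r` of the regular embeddings of Rabin string OT `P^{ROT^r}`. -/
def rotLeakage (r : ℕ) : ℝ :=
  -(1 / 2 + 2 ^ (-(r + 1 : ℤ))) * Real.logb 2 (1 / 2 + 2 ^ (-(r + 1 : ℤ))) +
    ((2 : ℝ) ^ r - 1) * (r + 1) * 2 ^ (-(r + 1 : ℤ)) - r / 2

/-! Write `ρ` for the reduced state `tr_A |ψ_θ⟩⟨ψ_θ|`. The von Neumann entropy dominates the
collision entropy: `S(ρ) ≥ -log₂ tr ρ²`. In the support of `P^{OT^r}` no two distinct inputs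
`(x₀, x₁)` are compatible with two distinct views `(c, y)`, i.e. the support contains no
rectangle. Hence every term of `tr ρ² = ∑ ψ(a,i) ψ̄(a,j) ψ(b,j) ψ̄(b,i)` with `a ≠ b` and `i ≠ j`
vanishes, the phases cancel from the others, and
`tr ρ² = ∑ P_Y² + ∑ P_X² - ∑ P² = ε (1 + 2ε)` with `ε = 2^{-(r+1)}`, whatever `θ` is.
With `L = log₂ (1 + 2ε)` this gives `Δ(ψ_θ) ≥ 1 - L`, while `Δ_r = 1 - rε - (1/2 + ε) L`;
the comparisons with `Δ_r` then reduce to `log (1 + x) ≤ x`, `2^{-r} ≥ 1 - r log 2` and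
`log 2 > 1/2`. -/

lemma Real.logb_two_zpow (k : ℤ) : Real.logb 2 ((2 : ℝ) ^ k) = k := by
  rw [← Real.rpow_intCast, Real.logb_rpow two_pos (by norm_num)]

section Entropy

variable {α : Type*} [Fintype α] {p : α → ℝ}

lemma shannonEntropy_of_flat {q : ℝ} (hp : ∀ x, p x = 0 ∨ p x = q) (h1 : ∑ x, p x = 1) :
    shannonEntropy p = -Real.logb 2 q := by
  have hterm : ∀ x, p x * Real.logb 2 (p x) = p x * Real.logb 2 q := fun x => by
    rcases hp x with h | h <;> simp [h]
  simp only [shannonEntropy, hterm, ← Finset.sum_mul, h1, one_mul]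

lemma sum_sq_of_flat {q : ℝ} (hp : ∀ x, p x = 0 ∨ p x = q) (h1 : ∑ x, p x = 1) :
    ∑ x, p x ^ 2 = q := by
  have hterm : ∀ x, p x ^ 2 = p x * q := fun x => by
    rcases hp x with h | h <;> simp [h, sq]
  simp only [hterm, ← Finset.sum_mul, h1, one_mul]

lemma sum_sq_pos_of_sum_eq_one (h1 : ∑ x, p x = 1) : 0 < ∑ x, p x ^ 2 := by
  refine (Finset.sum_nonneg fun x _ => sq_nonneg (p x)).lt_of_ne fun h0 => ?_
  have hzero : ∀ x, p x = 0 := fun x =>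
    pow_eq_zero_iff two_ne_zero |>.mp <|
      (Finset.sum_eq_zero_iff_of_nonneg fun x _ => sq_nonneg (p x)).mp h0.symm x (Finset.mem_univ x)
  simp [hzero] at h1

lemma neg_logb_sum_sq_le_shannonEntropy (hp : ∀ x, 0 ≤ p x) (h1 : ∑ x, p x = 1) :
    -Real.logb 2 (∑ x, p x ^ 2) ≤ shannonEntropy p := by
  set Q := ∑ x, p x ^ 2
  have hQ : 0 < Q := sum_sq_pos_of_sum_eq_one h1
  -- Gibbs: `log (p / Q) ≤ p / Q - 1`, weighted by `p`
  have hterm : ∀ x, p x * Real.log (p x) ≤ p x * Real.log Q - p x + p x ^ 2 / Q := fun x => by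
    rcases (hp x).eq_or_lt with h0 | h0
    · simp [← h0]
    · have h := mul_le_mul_of_nonneg_left
        (Real.log_le_sub_one_of_pos (div_pos h0 hQ)) (hp x)
      rw [Real.log_div h0.ne' hQ.ne'] at h
      field_simp at h ⊢
      linarith
  have hsum : ∑ x, p x * Real.log (p x) ≤ Real.log Q := calc
    ∑ x, p x * Real.log (p x) ≤ ∑ x, (p x * Real.log Q - p x + p x ^ 2 / Q) :=
      Finset.sum_le_sum fun x _ => hterm x
    _ = Real.log Q := by
      rw [Finset.sum_add_distrib, Finset.sum_sub_distrib, ← Finset.sum_mul, ← Finset.sum_div, h1]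
      field_simp
      ring
  simp only [shannonEntropy, Real.logb, ← mul_div_assoc, ← Finset.sum_div, ← neg_div]
  exact div_le_div_of_nonneg_right (neg_le_neg hsum) (Real.log_pos one_lt_two).le

end Entropy

lemma Matrix.IsHermitian.trace_mul_self_eq_sum_sq_eigenvalues {n : Type*} [Fintype n]
    [DecidableEq n] {A : Matrix n n ℂ} (hA : A.IsHermitian) :
    (A * A).trace = ∑ i, (hA.eigenvalues i : ℂ) ^ 2 := by
  conv_lhs => rw [hA.spectral_theorem, ← map_mul, Unitary.conjStarAlgAut_apply,
    Matrix.trace_mul_cycle, Unitary.coe_star_mul_self, Matrix.one_mul,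
    Matrix.diagonal_mul_diagonal, Matrix.trace_diagonal]
  simp [sq]

lemma neg_logb_trace_mul_self_le_vonNeumannEntropy {n : Type*} [Fintype n] [DecidableEq n]
    {ρ : Matrix n n ℂ} (hρ : ρ.PosSemidef) (htr : ρ.trace = 1) :
    -Real.logb 2 (ρ * ρ).trace.re ≤ vonNeumannEntropy ρ := by
  have hsum : ∑ i, hρ.isHermitian.eigenvalues i = 1 := by
    simpa [hρ.isHermitian.trace_eq_sum_eigenvalues] using congrArg Complex.re htr
  rw [vonNeumannEntropy, dif_pos hρ.isHermitian,
    hρ.isHermitian.trace_mul_self_eq_sum_sq_eigenvalues]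
  exact_mod_cast neg_logb_sum_sq_le_shannonEntropy hρ.eigenvalues_nonneg hsum

section RegularEmbedding

variable {α β : Type*}

lemma trLeft_outer_posSemidef [Fintype α] [Fintype β] (ψ : α × β → ℂ) :
    (trLeft (outer ψ)).PosSemidef := by
  have h : trLeft (outer ψ) = (Matrix.of fun a i => star (ψ (a, i)))ᴴ *
      Matrix.of fun a i => star (ψ (a, i)) := by
    ext i j
    simp [trLeft, outer, Matrix.mul_apply]
  rw [h]
  exact Matrix.posSemidef_conjTranspose_mul_self _

lemma trace_trLeft_outer [Fintype α] [Fintype β] (ψ : α × β → ℂ) :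
    (trLeft (outer ψ)).trace = ∑ p, ψ p * (starRingEnd ℂ) (ψ p) := by
  simp only [Matrix.trace, Matrix.diag, trLeft, outer, Fintype.sum_prod_type]
  exact Finset.sum_comm

lemma regEmbed_mul_conj (P θ : α × β → ℝ) {p : α × β} (hp : 0 ≤ P p) :
    regEmbed P θ p * (starRingEnd ℂ) (regEmbed P θ p) = P p := by
  rw [Complex.mul_conj, regEmbed, Complex.normSq_mul, Complex.normSq_ofReal,
    Complex.normSq_eq_norm_sq, Complex.norm_exp_ofReal_mul_I, Real.mul_self_sqrt hp]
  simp

lemma regEmbed_eq_zero (P θ : α × β → ℝ) {p : α × β} (hp : P p = 0) : regEmbed P θ p = 0 := by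
  simp [regEmbed, hp]

def IsRectangleFree (P : α × β → ℝ) : Prop :=
  ∀ a b i j, P (a, i) ≠ 0 → P (a, j) ≠ 0 → P (b, i) ≠ 0 → P (b, j) ≠ 0 → a = b ∨ i = j

lemma IsRectangleFree.regEmbed_mul_conj_mul [DecidableEq α] [DecidableEq β] {P : α × β → ℝ}
    (hR : IsRectangleFree P) (hP : ∀ p, 0 ≤ P p) (θ : α × β → ℝ) (a b : α) (i j : β) :
    regEmbed P θ (a, i) * (starRingEnd ℂ) (regEmbed P θ (a, j)) *
        (regEmbed P θ (b, j) * (starRingEnd ℂ) (regEmbed P θ (b, i))) =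
      (((if i = j then P (a, i) * P (b, i) else 0) + (if a = b then P (a, i) * P (a, j) else 0) -
        (if a = b ∧ i = j then P (a, i) ^ 2 else 0) : ℝ) : ℂ) := by
  by_cases hij : i = j
  · subst hij
    rw [regEmbed_mul_conj _ _ (hP _), regEmbed_mul_conj _ _ (hP _)]
    by_cases hab : a = b <;> simp [hab, sq]
  by_cases hab : a = b
  · subst hab
    rw [show ∀ x y z w : ℂ, x * y * (z * w) = x * w * (z * y) from fun _ _ _ _ => by ring,
      regEmbed_mul_conj _ _ (hP _), regEmbed_mul_conj _ _ (hP _)]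
    simp [hij]
  have hzero : P (a, i) = 0 ∨ P (a, j) = 0 ∨ P (b, i) = 0 ∨ P (b, j) = 0 := by
    by_contra! h
    exact (hR a b i j h.1 h.2.1 h.2.2.1 h.2.2.2).elim hab hij
  rcases hzero with h | h | h | h <;> simp [regEmbed_eq_zero _ _ h, hab, hij]

lemma IsRectangleFree.trace_trLeft_outer_regEmbed_mul_self [Fintype α] [Fintype β]
    [DecidableEq α] [DecidableEq β] {P : α × β → ℝ} (hR : IsRectangleFree P)
    (hP : ∀ p, 0 ≤ P p) (θ : α × β → ℝ) :
    (trLeft (outer (regEmbed P θ)) * trLeft (outer (regEmbed P θ))).trace =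
      ((∑ y, margY P y ^ 2 + ∑ x, margX P x ^ 2 - ∑ p, P p ^ 2 : ℝ) : ℂ) := by
  simp only [Matrix.trace, Matrix.diag, Matrix.mul_apply, trLeft, outer, Finset.sum_mul_sum,
    hR.regEmbed_mul_conj_mul hP]
  norm_cast
  simp only [Finset.sum_add_distrib, Finset.sum_sub_distrib, ite_and, Finset.sum_ite_irrel,
    Finset.sum_const_zero, Finset.sum_ite_eq, Finset.mem_univ, if_true, margX, margY, sq,
    Finset.sum_mul_sum, Fintype.sum_prod_type]
  congr 1
  · congr 1
    conv_rhs => rw [Finset.sum_comm]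
    exact Finset.sum_congr rfl fun _ _ => Finset.sum_comm
  · exact Finset.sum_comm

lemma sum_margX [Fintype α] [Fintype β] (P : α × β → ℝ) : ∑ x, margX P x = ∑ p, P p :=
  (Fintype.sum_prod_type P).symm

lemma sum_margY [Fintype α] [Fintype β] (P : α × β → ℝ) : ∑ y, margY P y = ∑ p, P p := by
  rw [Fintype.sum_prod_type, Finset.sum_comm]
  rfl

lemma IsRectangleFree.neg_logb_sub_mutualInfo_le_regLeakage [Fintype α] [Fintype β]
    [DecidableEq α] [DecidableEq β] {P : α × β → ℝ} (hR : IsRectangleFree P)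
    (hP : ∀ p, 0 ≤ P p) (h1 : ∑ p, P p = 1) (θ : α × β → ℝ) :
    -Real.logb 2 (∑ y, margY P y ^ 2 + ∑ x, margX P x ^ 2 - ∑ p, P p ^ 2) - mutualInfo P ≤
      regLeakage P θ := by
  have htr : (trLeft (outer (regEmbed P θ))).trace = 1 := by
    simp only [trace_trLeft_outer, regEmbed_mul_conj _ _ (hP _)]
    exact_mod_cast h1
  have hS := neg_logb_trace_mul_self_le_vonNeumannEntropy (trLeft_outer_posSemidef _) htr
  rw [hR.trace_trLeft_outer_regEmbed_mul_self hP, Complex.ofReal_re] at hS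
  exact sub_le_sub_right hS _

end RegularEmbedding

section StringOT

variable (r : ℕ)

lemma PotStr_eq_zero_or (p : ((Fin r → Bool) × (Fin r → Bool)) × (Bool × (Fin r → Bool))) :
    PotStr r p = 0 ∨ PotStr r p = 2 ^ (-(2 * r + 1 : ℤ)) := by
  unfold PotStr
  split_ifs <;> simp

lemma PotStr_nonneg (p : ((Fin r → Bool) × (Fin r → Bool)) × (Bool × (Fin r → Bool))) :
    0 ≤ PotStr r p := by
  unfold PotStr
  split <;> positivity

lemma margX_PotStr (a : (Fin r → Bool) × (Fin r → Bool)) :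
    margX (PotStr r) a = 2 ^ (-(2 * r : ℤ)) := by
  simp only [margX, PotStr, Fintype.sum_prod_type, Fintype.sum_bool, if_true, Bool.false_eq_true,
    if_false, Finset.sum_ite_eq', Finset.mem_univ]
  rw [← two_mul, ← zpow_one_add₀ two_ne_zero]
  ring_nf

lemma margY_PotStr (i : Bool × (Fin r → Bool)) : margY (PotStr r) i = 2 ^ (-(r + 1 : ℤ)) := by
  obtain ⟨c, y⟩ := i
  simp only [margY, PotStr, Fintype.sum_prod_type]
  cases c <;> simp only [Bool.false_eq_true, if_true, if_false, Finset.sum_ite_irrel,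
    Finset.sum_ite_eq, Finset.sum_const, Finset.mem_univ, Finset.card_univ, Fintype.card_pi,
    Fintype.card_bool, Finset.prod_const, Fintype.card_fin, nsmul_eq_mul, mul_zero, Nat.cast_pow,
    Nat.cast_ofNat]
  all_goals (rw [← zpow_natCast, ← zpow_add₀ two_ne_zero]; ring_nf)

lemma sum_PotStr : ∑ p, PotStr r p = 1 := by
  rw [← sum_margX]
  simp only [margX_PotStr, Finset.sum_const, Finset.card_univ, Fintype.card_prod, Fintype.card_pi,
    Fintype.card_bool, Finset.prod_const, Fintype.card_fin, nsmul_eq_mul]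
  push_cast
  rw [← pow_add, ← two_mul, ← zpow_natCast, ← zpow_add₀ two_ne_zero]
  push_cast
  simp

lemma isRectangleFree_PotStr : IsRectangleFree (PotStr r) := by
  rintro ⟨a₀, a₁⟩ ⟨b₀, b₁⟩ ⟨c, y⟩ ⟨c', y'⟩ hai haj hbi hbj
  simp only [PotStr, ne_eq, ite_eq_right_iff, Classical.not_imp] at hai haj hbi hbj
  cases c <;> cases c' <;> simp_all

lemma mutualInfo_PotStr : mutualInfo (PotStr r) = r := by
  have hX := sum_margX (PotStr r)
  have hY := sum_margY (PotStr r)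
  rw [sum_PotStr] at hX hY
  rw [mutualInfo, shannonEntropy_of_flat (fun x => Or.inr (margX_PotStr r x)) hX,
    shannonEntropy_of_flat (fun y => Or.inr (margY_PotStr r y)) hY,
    shannonEntropy_of_flat (PotStr_eq_zero_or r) (sum_PotStr r)]
  simp only [Real.logb_two_zpow]
  push_cast
  ring

lemma sum_sq_margY_add_sum_sq_margX_sub_sum_sq_PotStr :
    ∑ y, margY (PotStr r) y ^ 2 + ∑ x, margX (PotStr r) x ^ 2 - ∑ p, PotStr r p ^ 2 =
      2 ^ (-(r + 1 : ℤ)) + 2 ^ (-(2 * r : ℤ)) - 2 ^ (-(2 * r + 1 : ℤ)) := by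
  have hX := sum_margX (PotStr r)
  have hY := sum_margY (PotStr r)
  rw [sum_PotStr] at hX hY
  rw [sum_sq_of_flat (fun x => Or.inr (margX_PotStr r x)) hX,
    sum_sq_of_flat (fun y => Or.inr (margY_PotStr r y)) hY,
    sum_sq_of_flat (PotStr_eq_zero_or r) (sum_PotStr r)]

end StringOT

lemma one_sub_two_zpow_neg_le (r : ℕ) : 1 - (2 : ℝ) ^ (-(r : ℤ)) ≤ r * Real.log 2 := by
  have h : (2 : ℝ) ^ (-(r : ℤ)) = Real.exp (-(r * Real.log 2)) := by
    rw [← Real.rpow_intCast, Real.rpow_def_of_pos two_pos]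
    push_cast
    ring_nf
  rw [h]
  linarith [Real.add_one_le_exp (-(r * Real.log 2))]

lemma logb_two_one_add_le {x : ℝ} (hx : 0 ≤ x) : Real.logb 2 (1 + x) * Real.log 2 ≤ x := by
  rw [Real.logb, div_mul_cancel₀ _ (Real.log_pos one_lt_two).ne']
  linarith [Real.log_le_sub_one_of_pos (by positivity : 0 < 1 + x)]

section RabinLeakage

variable (r : ℕ)

lemma two_mul_two_zpow_neg_succ : 2 * (2 : ℝ) ^ (-(r + 1 : ℤ)) = 2 ^ (-(r : ℤ)) := by
  rw [← zpow_one_add₀ two_ne_zero]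
  congr 1
  ring

lemma two_mul_two_zpow_neg_succ_le_one : 2 * (2 : ℝ) ^ (-(r + 1 : ℤ)) ≤ 1 :=
  two_mul_two_zpow_neg_succ r ▸ zpow_le_one_of_nonpos₀ one_le_two (by simp)

lemma rotLeakage_eq :
    rotLeakage r = 1 - r * 2 ^ (-(r + 1 : ℤ)) -
      (1 / 2 + 2 ^ (-(r + 1 : ℤ))) * Real.logb 2 (1 + 2 * 2 ^ (-(r + 1 : ℤ))) := by
  set ε : ℝ := 2 ^ (-(r + 1 : ℤ))
  have hlogb : Real.logb 2 (1 / 2 + ε) = Real.logb 2 (1 + 2 * ε) - 1 := by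
    rw [show 1 / 2 + ε = (1 + 2 * ε) / 2 by ring,
      Real.logb_div (by positivity) two_ne_zero, Real.logb_self_eq_one one_lt_two]
  have hpow : (2 : ℝ) ^ r * ε = 1 / 2 := by
    rw [← zpow_natCast, ← zpow_add₀ two_ne_zero]
    norm_num
  rw [rotLeakage, hlogb]
  linear_combination (↑r + 1) * hpow

lemma rotLeakage_le_neg_logb_sub :
    rotLeakage r ≤
      -Real.logb 2 (2 ^ (-(r + 1 : ℤ)) + 2 ^ (-(2 * r : ℤ)) - 2 ^ (-(2 * r + 1 : ℤ))) - r := by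
  rw [rotLeakage_eq]
  set ε : ℝ := 2 ^ (-(r + 1 : ℤ))
  have hε : 0 < ε := by positivity
  have hQ : (2 : ℝ) ^ (-(2 * r : ℤ)) - 2 ^ (-(2 * r + 1 : ℤ)) = 2 * ε ^ 2 := by
    have h4 : (2 : ℝ) ^ (-(2 * r : ℤ)) = 2 ^ (2 : ℤ) * (ε * ε) := by
      rw [← zpow_add₀ two_ne_zero, ← zpow_add₀ two_ne_zero]
      congr 1
      ring
    have h2 : (2 : ℝ) ^ (-(2 * r + 1 : ℤ)) = 2 * (ε * ε) := by
      rw [← zpow_add₀ two_ne_zero, ← zpow_one_add₀ two_ne_zero]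
      congr 1
      ring
    rw [h4, h2]
    ring
  have hlogb : Real.logb 2 (ε + 2 * ε ^ 2) = -(r + 1) + Real.logb 2 (1 + 2 * ε) := by
    rw [show ε + 2 * ε ^ 2 = ε * (1 + 2 * ε) by ring, Real.logb_mul hε.ne' (by positivity),
      Real.logb_two_zpow]
    push_cast
    ring
  have hL := logb_two_one_add_le (by positivity : 0 ≤ 2 * ε)
  have hr := two_mul_two_zpow_neg_succ r ▸ one_sub_two_zpow_neg_le r
  have hε2 := two_mul_two_zpow_neg_succ_le_one r
  rw [add_sub_assoc, hQ, hlogb]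
  have hkey : (1 / 2 - ε) * Real.logb 2 (1 + 2 * ε) ≤ r * ε := by
    refine le_of_mul_le_mul_right ?_ (Real.log_pos one_lt_two)
    nlinarith [mul_le_mul_of_nonneg_left hL (by linarith : 0 ≤ 1 / 2 - ε),
      mul_le_mul_of_nonneg_left hr hε.le]
  linarith

lemma one_sub_le_rotLeakage : 1 - (r + 4) * 2 ^ (-(r + 1 : ℤ)) ≤ rotLeakage r := by
  rw [rotLeakage_eq]
  set ε : ℝ := 2 ^ (-(r + 1 : ℤ))
  have hε : 0 < ε := by positivity
  have hL := logb_two_one_add_le (by positivity : 0 ≤ 2 * ε)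
  have hε2 := two_mul_two_zpow_neg_succ_le_one r
  have hlog2 := Real.log_two_gt_d9
  have hkey : (1 / 2 + ε) * Real.logb 2 (1 + 2 * ε) ≤ 4 * ε := by
    refine le_of_mul_le_mul_right ?_ (Real.log_pos one_lt_two)
    nlinarith [mul_le_mul_of_nonneg_left hL (by linarith : 0 ≤ 1 / 2 + ε)]
  linarith

end RabinLeakage

theorem string_ot_leakage_general (r : ℕ) :
    (∀ θ : ((Fin r → Bool) × (Fin r → Bool)) × (Bool × (Fin r → Bool)) → ℝ,
      rotLeakage r ≤ regLeakage (PotStr r) θ) ∧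
    1 - (r + 4) * 2 ^ (-(r + 1 : ℤ)) ≤ primLeakage (PotStr r) := by
  have hθ : ∀ θ, rotLeakage r ≤ regLeakage (PotStr r) θ := fun θ => by
    have h := (isRectangleFree_PotStr r).neg_logb_sub_mutualInfo_le_regLeakage (PotStr_nonneg r)
      (sum_PotStr r) θ
    rw [sum_sq_margY_add_sum_sq_margX_sub_sum_sq_PotStr, mutualInfo_PotStr] at h
    exact (rotLeakage_le_neg_logb_sub r).trans h
  exact ⟨hθ, (one_sub_le_rotLeakage r).trans (le_ciInf hθ)⟩

/-- every regular embedding of `P^{OT^r}` has leakage at least `Δ_r`;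
in particular the leakage of the primitive `P^{OT^r}` is at least
`1 − (r+4)·2^{−(r+1)}`. -/
theorem string_ot_leakage (r : ℕ) (hr : 1 ≤ r) :
    (∀ θ : ((Fin r → Bool) × (Fin r → Bool)) × (Bool × (Fin r → Bool)) → ℝ,
      rotLeakage r ≤ regLeakage (PotStr r) θ) ∧
    1 - (r + 4) * 2 ^ (-(r + 1 : ℤ)) ≤ primLeakage (PotStr r) :=
  string_ot_leakage_general r
end
end
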